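/- Scattering time estimate for a repulsive short-range potential: there exists an absolute constant A > 0 with the following property. Let Φ : ℝ³∖{0} → [0,∞) be C², radial (Φ(x) = φ(|x|)) with φ nonincreasing, and Φ(x) = 0 for |x| ≥ 1. Let x : [0,∞) → ℝ³∖{0} be a C² solution of ẍ(t) = −∇Φ(x(t)) with |x(0)| = 1 and x(0)·ẋ(0) ≤ 0. Set V := |ẋ(0)| and ρ := |x(0) × ẋ(0)|/V (the impact parameter), and assume V > 0 and ρ > 0. Then the Lebesgue measure of the set {t ≥ 0 : |x(t)| ≤ 1} is at most A/(ρV). -/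

import Mathlib

/-!
A radial potential with nonincreasing profile exerts a repulsive central force
`-∇Φ(x) = -c x` with `c ≤ 0`. Along the trajectory the squared angular momentum
`‖x‖²‖v‖² - ⟪x, v⟫² = (ρV)²` is conserved, and the radial velocity `g = ⟪x, v⟫` satisfies
`g' = ‖v‖² - c‖x‖² ≥ ‖v‖²`. Hence `‖x‖²` is convex in time, so the times spent in the unit
ball form an interval starting at `0`, on which `g' ≥ ‖x‖²‖v‖² = g² + (ρV)²`. Comparing
with the Riccati equation, `arctan (g / ρV)` grows at rate at least `ρV`; being bounded by
`π/2` in absolute value, it leaves time less than `π / (ρV)`.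
-/

open MeasureTheory Real
open scoped ENNReal RealInnerProductSpace

noncomputable section

/-- Three-dimensional Euclidean space. -/
abbrev V3 := EuclideanSpace ℝ (Fin 3)

/-- The Euclidean norm of the cross product of two vectors of `ℝ³`. -/
def crossNorm (a b : V3) : ℝ :=
  ‖(WithLp.equiv 2 (Fin 3 → ℝ)).symm
    (crossProduct (WithLp.equiv 2 (Fin 3 → ℝ) a) (WithLp.equiv 2 (Fin 3 → ℝ) b))‖

open Set

section Radial

variable {E : Type*} [NormedAddCommGroup E] [InnerProductSpace ℝ E]

theorem hasStrictFDerivAt_norm {y : E} (hy : y ≠ 0) :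
    HasStrictFDerivAt (‖·‖) (‖y‖⁻¹ • innerSL ℝ y) y := by
  have hsq : ‖y‖ ^ 2 ≠ 0 := pow_ne_zero 2 (norm_ne_zero_iff.2 hy)
  have hsqrt := (Real.hasStrictDerivAt_sqrt hsq).comp_hasStrictFDerivAt y
    (hasStrictFDerivAt_norm_sq y)
  have hnorm : (‖·‖ : E → ℝ) = fun z => √(‖z‖ ^ 2) :=
    funext fun z => (Real.sqrt_sq (norm_nonneg z)).symm
  rw [hnorm]
  refine hsqrt.congr_fderiv ?_
  ext u
  simp [Real.sqrt_sq (norm_nonneg _)]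
  field_simp

theorem differentiableAt_of_radial {Φ : E → ℝ} {φ : ℝ → ℝ} (hrad : ∀ z, Φ z = φ ‖z‖) {y : E}
    (hy : y ≠ 0) (hΦ : DifferentiableAt ℝ Φ y) : DifferentiableAt ℝ φ ‖y‖ := by
  have hr : 0 < ‖y‖ := norm_pos_iff.2 hy
  set e : E := ‖y‖⁻¹ • y
  have hline : ∀ s, 0 < s → Φ (s • e) = φ s := fun s hs => by
    rw [hrad, norm_smul, norm_smul, norm_inv, norm_norm, inv_mul_cancel₀ hr.ne', mul_one,
      Real.norm_of_nonneg hs.le]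
  have hye : ‖y‖ • e = y := by simp [e, smul_smul, mul_inv_cancel₀ hr.ne']
  have hΦ' : DifferentiableAt ℝ Φ (‖y‖ • e) := by rwa [hye]
  have hcomp : DifferentiableAt ℝ (fun s : ℝ => Φ (s • e)) ‖y‖ :=
    hΦ'.comp ‖y‖ (differentiableAt_id.smul_const e)
  exact hcomp.congr_of_eventuallyEq <|
    (eventually_gt_nhds hr).mono fun s hs => (hline s hs).symm

theorem hasGradientAt_of_radial [CompleteSpace E] {Φ : E → ℝ} {φ : ℝ → ℝ}
    (hrad : ∀ z, Φ z = φ ‖z‖) {y : E} (hy : y ≠ 0) (hΦ : DifferentiableAt ℝ Φ y) :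
    HasGradientAt Φ ((deriv φ ‖y‖ / ‖y‖) • y) y := by
  have hΦφ : Φ = fun z => φ ‖z‖ := funext hrad
  have h := (differentiableAt_of_radial hrad hy hΦ).hasDerivAt.comp_hasFDerivAt y
    (hasStrictFDerivAt_norm hy).hasFDerivAt
  rw [hasGradientAt_iff_hasFDerivAt, hΦφ]
  refine h.congr_fderiv ?_
  ext u
  simp
  field_simp

end Radial

theorem AntitoneOn.deriv_nonpos_of_pos {φ : ℝ → ℝ} (hφ : AntitoneOn φ (Ioi 0)) {r : ℝ}
    (hr : 0 < r) : deriv φ r ≤ 0 :=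
  derivWithin_of_isOpen (f := φ) isOpen_Ioi (mem_Ioi.2 hr) ▸ hφ.derivWithin_nonpos

theorem mul_sub_lt_pi_of_sq_add_sq_le_deriv {g g' : ℝ → ℝ} {a t₀ t₁ : ℝ} (ha : 0 < a)
    (ht : t₀ ≤ t₁) (hg : ∀ t ∈ Icc t₀ t₁, HasDerivAt g (g' t) t)
    (hg' : ∀ t ∈ Icc t₀ t₁, g t ^ 2 + a ^ 2 ≤ g' t) : a * (t₁ - t₀) < π := by
  set h : ℝ → ℝ := fun t => arctan (g t / a) - a * t
  have hh : ∀ t ∈ Icc t₀ t₁, HasDerivAt h (1 / (1 + (g t / a) ^ 2) * (g' t / a) - a * 1) t :=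
    fun t ht => ((hasDerivAt_arctan _).comp t ((hg t ht).div_const a)).sub
      ((hasDerivAt_id t).const_mul a)
  have hh_nonneg : ∀ t ∈ Icc t₀ t₁, 0 ≤ 1 / (1 + (g t / a) ^ 2) * (g' t / a) - a * 1 := by
    intro t ht
    have key : 1 / (1 + (g t / a) ^ 2) * (g' t / a) = a * g' t / (a ^ 2 + g t ^ 2) := by
      field_simp
    rw [key, mul_one, sub_nonneg, le_div_iff₀ (by positivity)]
    nlinarith [hg' t ht]
  have hmono : MonotoneOn h (Icc t₀ t₁) := by
    refine monotoneOn_of_deriv_nonneg (convex_Icc t₀ t₁)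
      (fun t ht => (hh t ht).continuousAt.continuousWithinAt)
      (fun t ht => (hh t (interior_subset ht)).differentiableAt.differentiableWithinAt)
      fun t ht => ?_
    rw [(hh t (interior_subset ht)).deriv]
    exact hh_nonneg t (interior_subset ht)
  have h01 := hmono (left_mem_Icc.2 ht) (right_mem_Icc.2 ht) ht
  have h_lt := arctan_lt_pi_div_two (g t₁ / a)
  have h_gt := neg_pi_div_two_lt_arctan (g t₀ / a)
  simp only [h] at h01
  linarith

section CentralForce

variable {E : Type*} [NormedAddCommGroup E] [InnerProductSpace ℝ E]

/-- `‖x × v‖²` by Lagrange's identity (`crossNorm_sq`), but meaningful in any inner product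
space. -/
def angularMomentumSq (x v : E) : ℝ := ‖x‖ ^ 2 * ‖v‖ ^ 2 - ⟪x, v⟫ ^ 2

theorem crossNorm_sq (a b : V3) : crossNorm a b ^ 2 = angularMomentumSq a b := by
  simp only [crossNorm, angularMomentumSq, ← real_inner_self_eq_norm_sq,
    EuclideanSpace.inner_eq_star_dotProduct, WithLp.equiv_symm_apply, WithLp.equiv_apply,
    star_trivial, cross_dot_cross]
  rw [dotProduct_comm b.ofLp a.ofLp]
  ring

variable {x v : ℝ → E} {c : ℝ → ℝ} {t : ℝ}

theorem hasDerivAt_inner_of_central (hx : HasDerivAt x (v t) t)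
    (hv : HasDerivAt v (-(c t • x t)) t) :
    HasDerivAt (fun s => ⟪x s, v s⟫) (‖v t‖ ^ 2 - c t * ‖x t‖ ^ 2) t := by
  refine (hx.inner ℝ hv).congr_deriv ?_
  rw [inner_neg_right, real_inner_smul_right, real_inner_self_eq_norm_sq,
    real_inner_self_eq_norm_sq]
  ring

theorem hasDerivAt_angularMomentumSq_of_central (hx : HasDerivAt x (v t) t)
    (hv : HasDerivAt v (-(c t • x t)) t) :
    HasDerivAt (fun s => angularMomentumSq (x s) (v s)) 0 t := by
  refine ((hx.norm_sq.mul hv.norm_sq).sub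
    ((hasDerivAt_inner_of_central hx hv).pow 2)).congr_deriv ?_
  rw [inner_neg_right, real_inner_smul_right, real_inner_comm (x t)]
  push_cast
  ring

theorem angularMomentumSq_eq_of_central (hx : ∀ t, 0 ≤ t → HasDerivAt x (v t) t)
    (hv : ∀ t, 0 ≤ t → HasDerivAt v (-(c t • x t)) t) (ht : 0 ≤ t) :
    angularMomentumSq (x t) (v t) = angularMomentumSq (x 0) (v 0) := by
  have hL : ∀ s, 0 ≤ s → HasDerivAt (fun s => angularMomentumSq (x s) (v s)) 0 s :=
    fun s hs => hasDerivAt_angularMomentumSq_of_central (hx s hs) (hv s hs)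
  exact constant_of_has_deriv_right_zero
    (fun s hs => (hL s hs.1).continuousAt.continuousWithinAt)
    (fun s hs => (hL s hs.1).hasDerivWithinAt) t (right_mem_Icc.2 ht)

theorem convexOn_norm_sq_of_central (hx : ∀ t, 0 ≤ t → HasDerivAt x (v t) t)
    (hv : ∀ t, 0 ≤ t → HasDerivAt v (-(c t • x t)) t) (hc : ∀ t, 0 ≤ t → c t ≤ 0) :
    ConvexOn ℝ (Ici 0) fun t => ‖x t‖ ^ 2 := by
  refine convexOn_of_hasDerivWithinAt2_nonneg (convex_Ici 0)
    (fun t ht => (hx t ht).norm_sq.continuousAt.continuousWithinAt)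
    (f' := fun t => 2 * ⟪x t, v t⟫) (f'' := fun t => 2 * (‖v t‖ ^ 2 - c t * ‖x t‖ ^ 2))
    (fun t ht => ?_) (fun t ht => ?_) fun t ht => ?_
  · rw [interior_Ici] at ht ⊢
    exact (hx t ht.le).norm_sq.hasDerivWithinAt
  · rw [interior_Ici] at ht ⊢
    exact ((hasDerivAt_inner_of_central (hx t ht.le) (hv t ht.le)).const_mul
      2).hasDerivWithinAt
  · rw [interior_Ici] at ht
    have := mul_nonpos_of_nonpos_of_nonneg (hc t ht.le) (sq_nonneg ‖x t‖)
    nlinarith [sq_nonneg ‖v t‖]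

theorem mul_lt_pi_of_central_of_norm_le_one (hx : ∀ t, 0 ≤ t → HasDerivAt x (v t) t)
    (hv : ∀ t, 0 ≤ t → HasDerivAt v (-(c t • x t)) t) (hc : ∀ t, 0 ≤ t → c t ≤ 0)
    (hx₀ : ‖x 0‖ ≤ 1) {a : ℝ} (ha : 0 < a) (hL : angularMomentumSq (x 0) (v 0) = a ^ 2)
    (ht : 0 ≤ t) (hxt : ‖x t‖ ≤ 1) : a * t < π := by
  have hin : ∀ s ∈ Icc 0 t, ‖x s‖ ^ 2 ≤ 1 := fun s hs =>
    ((convexOn_norm_sq_of_central hx hv hc).le_max_of_mem_Icc self_mem_Ici ht hs).trans <|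
      max_le (pow_le_one₀ (norm_nonneg _) hx₀) (pow_le_one₀ (norm_nonneg _) hxt)
  have hriccati : ∀ s ∈ Icc 0 t, ⟪x s, v s⟫ ^ 2 + a ^ 2 ≤ ‖v s‖ ^ 2 - c s * ‖x s‖ ^ 2 :=
    fun s hs => by
      have hLs := angularMomentumSq_eq_of_central hx hv hs.1
      rw [hL, angularMomentumSq] at hLs
      have hrepulsive := mul_nonpos_of_nonpos_of_nonneg (hc s hs.1) (sq_nonneg ‖x s‖)
      calc ⟪x s, v s⟫ ^ 2 + a ^ 2 = ‖x s‖ ^ 2 * ‖v s‖ ^ 2 := by linarith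
        _ ≤ 1 * ‖v s‖ ^ 2 := by gcongr; exact hin s hs
        _ ≤ ‖v s‖ ^ 2 - c s * ‖x s‖ ^ 2 := by linarith
  simpa using mul_sub_lt_pi_of_sq_add_sq_le_deriv ha ht
    (fun s hs => hasDerivAt_inner_of_central (hx s hs.1) (hv s hs.1)) hriccati

end CentralForce

/-- Scattering time estimate for a repulsive short-range potential: there is an
absolute constant `A > 0` such that, for any radial nonincreasing `C²` potential
`Φ ≥ 0` supported in the unit ball, any solution of `ẍ = −∇Φ(x)` entering the unit
sphere with speed `V > 0` and impact parameter `ρ > 0` spends a total time at most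
`A/(ρV)` within interaction range. -/
theorem scattering_time_estimate :
    ∃ A : ℝ, 0 < A ∧
      ∀ (Φ : V3 → ℝ) (φ : ℝ → ℝ),
        ContDiffOn ℝ 2 Φ {(0 : V3)}ᶜ →
        (∀ x : V3, Φ x = φ ‖x‖) →
        (∀ r s : ℝ, 0 < r → r ≤ s → φ s ≤ φ r) →
        (∀ x : V3, x ≠ 0 → 0 ≤ Φ x) →
        (∀ x : V3, 1 ≤ ‖x‖ → Φ x = 0) →
        ∀ (x v : ℝ → V3),
          (∀ t : ℝ, 0 ≤ t → x t ≠ 0) →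
          (∀ t : ℝ, 0 ≤ t → HasDerivAt x (v t) t) →
          (∀ t : ℝ, 0 ≤ t → HasDerivAt v (-gradient Φ (x t)) t) →
          ‖x 0‖ = 1 →
          ⟪x 0, v 0⟫ ≤ 0 →
          ∀ (V ρ : ℝ), V = ‖v 0‖ → ρ = crossNorm (x 0) (v 0) / V →
            0 < V → 0 < ρ →
            volume {t : ℝ | 0 ≤ t ∧ ‖x t‖ ≤ 1} ≤ ENNReal.ofReal (A / (ρ * V)) := by
  refine ⟨π, pi_pos, ?_⟩
  intro Φ φ hΦ hrad hmono _ _ x v hx_ne hx hv hx₀ _ V ρ _ hρ_def hV_pos hρ_pos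
  have hφ : AntitoneOn φ (Ioi 0) := fun r hr s _ hrs => hmono r s hr hrs
  have hv' : ∀ t, 0 ≤ t → HasDerivAt v (-((deriv φ ‖x t‖ / ‖x t‖) • x t)) t := fun t ht => by
    have hΦt := (hΦ.differentiableOn (by norm_num)).differentiableAt
      (isOpen_compl_singleton.mem_nhds (hx_ne t ht))
    rw [← (hasGradientAt_of_radial hrad (hx_ne t ht) hΦt).gradient]
    exact hv t ht
  have hc : ∀ t, 0 ≤ t → deriv φ ‖x t‖ / ‖x t‖ ≤ 0 := fun t ht =>
    div_nonpos_of_nonpos_of_nonneg (hφ.deriv_nonpos_of_pos (norm_pos_iff.2 (hx_ne t ht)))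
      (norm_nonneg _)
  have hL : angularMomentumSq (x 0) (v 0) = (ρ * V) ^ 2 := by
    rw [← crossNorm_sq, hρ_def, div_mul_cancel₀ _ hV_pos.ne']
  have hsub : {t : ℝ | 0 ≤ t ∧ ‖x t‖ ≤ 1} ⊆ Icc 0 (π / (ρ * V)) := fun t ⟨ht, hxt⟩ =>
    ⟨ht, (le_div_iff₀' (mul_pos hρ_pos hV_pos)).2
      (mul_lt_pi_of_central_of_norm_le_one hx hv' hc hx₀.le (mul_pos hρ_pos hV_pos) hL ht hxt).le⟩
  simpa using measure_mono (μ := volume) hsub
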